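/- Let Ω be a convex subset of a topological vector space X. (a) If x̄ ∈ ri(Ω) and x̃ ∈ Ω, then the half-open segment (x̃, x̄] is contained in ri(Ω). (b) If x̄ ∈ iri(Ω) and x̃ ∈ Ω, then (x̃, x̄] ⊆ iri(Ω). (c) If in addition X is locally convex, x̄ ∈ qri(Ω) and x̃ ∈ Ω, then (x̃, x̄] ⊆ qri(Ω). -/

import Mathlib

/-! The three statements rest on one observation about `y = (1 - λ) x̃ + λ x̄` with `0 < λ ≤ 1`:
the homothety with centre `x̃` and ratio `λ` maps `Ω` into `Ω`, sends `x̄` to `y`, and (having a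
continuous inverse that preserves `aff Ω`) carries a relative neighbourhood of `x̄` in `Ω` to one of
`y`. On the level of cones, `y + λ (ω - x̄) = (1 - λ) x̃ + λ ω ∈ Ω` gives
`cone (Ω - x̄) ⊆ cone (Ω - y)`, while `Ω - y ⊆ span (Ω - x̄)`; so if `cone (Ω - x̄)` or its
closure is a subspace `L`, then `cone (Ω - y)` is squeezed between `cone (Ω - x̄)` and `L`, and
equals `L` (respectively has closure `L`). -/

open Set Pointwise Filter Topology

/-- The cone generated by a set `A`: `{t • a | t ≥ 0, a ∈ A}`. -/
def coneGen {X : Type*} [AddCommGroup X] [Module ℝ X] (A : Set X) : Set X :=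
  {y | ∃ t : ℝ, 0 ≤ t ∧ ∃ a ∈ A, y = t • a}

/-- A set is a linear subspace if it is the carrier of a submodule. -/
def IsLinSubspace {X : Type*} [AddCommGroup X] [Module ℝ X] (s : Set X) : Prop :=
  ∃ L : Submodule ℝ X, (L : Set X) = s

/-- Intrinsic relative interior. -/
def iri {X : Type*} [AddCommGroup X] [Module ℝ X] (Ω : Set X) : Set X :=
  {x ∈ Ω | IsLinSubspace (coneGen ((fun y => y - x) '' Ω))}

/-- Quasi-relative interior. -/
def qri {X : Type*} [AddCommGroup X] [Module ℝ X] [TopologicalSpace X] (Ω : Set X) : Set X :=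
  {x ∈ Ω | IsLinSubspace (closure (coneGen ((fun y => y - x) '' Ω)))}

/-- Relative interior in a topological vector space. -/
def ri {X : Type*} [AddCommGroup X] [Module ℝ X] [TopologicalSpace X] (Ω : Set X) : Set X :=
  {x ∈ Ω | ∃ V ∈ nhds x, V ∩ closure ((affineSpan ℝ Ω : Set X)) ⊆ Ω}

/-- Normal cone (functional-analytic version), a subset of the topological dual. -/
def normalCone {X : Type*} [AddCommGroup X] [Module ℝ X] [TopologicalSpace X]
    (Ω : Set X) (xb : X) : Set (X →L[ℝ] ℝ) :=
  {f | ∀ x ∈ Ω, f (x - xb) ≤ 0}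

/-- The half-open segment `(x̃, xb] = {(1 − λ)·x̃ + λ·xb | 0 < λ ≤ 1}`. -/
def halfOpenSegment {X : Type*} [AddCommGroup X] [Module ℝ X] (xt xb : X) : Set X :=
  {y | ∃ l : ℝ, 0 < l ∧ l ≤ 1 ∧ y = (1 - l) • xt + l • xb}

open AffineMap

section Cones

variable {X : Type*} [AddCommGroup X] [Module ℝ X]

lemma subset_coneGen (A : Set X) : A ⊆ coneGen A :=
  fun a ha => ⟨1, zero_le_one, a, ha, (one_smul ℝ a).symm⟩

lemma coneGen_subset_of_subset_coneGen {A B : Set X} (h : A ⊆ coneGen B) :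
    coneGen A ⊆ coneGen B := by
  rintro _ ⟨t, ht, a, ha, rfl⟩
  obtain ⟨s, hs, b, hb, rfl⟩ := h ha
  exact ⟨t * s, mul_nonneg ht hs, b, hb, (mul_smul t s b).symm⟩

lemma coneGen_subset_submodule {A : Set X} {L : Submodule ℝ X} (h : A ⊆ L) :
    coneGen A ⊆ L := by
  rintro _ ⟨t, -, a, ha, rfl⟩
  exact L.smul_mem t (h ha)

lemma image_sub_subset_submodule {Ω : Set X} {x y : X} {L : Submodule ℝ X}
    (h : (· - x) '' Ω ⊆ L) (hy : y ∈ Ω) : (· - y) '' Ω ⊆ L := by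
  rintro _ ⟨ω, hω, rfl⟩
  have hsub : (ω - x) - (y - x) ∈ L := L.sub_mem (h ⟨ω, hω, rfl⟩) (h ⟨y, hy, rfl⟩)
  rwa [sub_sub_sub_cancel_right] at hsub

lemma halfOpenSegment_eq_image_lineMap (x y : X) :
    halfOpenSegment x y = lineMap x y '' Ioc (0 : ℝ) 1 := by
  ext z
  simp only [halfOpenSegment, lineMap_apply_module, mem_image, mem_Ioc]
  constructor
  · rintro ⟨l, hl0, hl1, rfl⟩
    exact ⟨l, ⟨hl0, hl1⟩, rfl⟩
  · rintro ⟨l, ⟨hl0, hl1⟩, rfl⟩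
    exact ⟨l, hl0, hl1, rfl⟩

lemma coneGen_image_sub_subset_of_lineMap {Ω : Set X} (hconv : Convex ℝ Ω) {x y : X}
    (hx : x ∈ Ω) {l : ℝ} (hl : l ∈ Ioc (0 : ℝ) 1) :
    coneGen ((· - y) '' Ω) ⊆ coneGen ((· - lineMap x y l) '' Ω) := by
  refine coneGen_subset_of_subset_coneGen ?_
  rintro _ ⟨ω, hω, rfl⟩
  refine ⟨l⁻¹, inv_nonneg.2 hl.1.le, lineMap x ω l - lineMap x y l,
    ⟨lineMap x ω l, hconv.lineMap_mem hx hω (Ioc_subset_Icc_self hl), rfl⟩, ?_⟩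
  rw [lineMap_apply_module, lineMap_apply_module, add_sub_add_left_eq_sub, ← smul_sub,
    inv_smul_smul₀ hl.1.ne']

end Cones

section RelativeInteriors

variable {X : Type*} [AddCommGroup X] [Module ℝ X] {Ω : Set X}

lemma lineMap_mem_iri (hconv : Convex ℝ Ω) {x y : X} (hx : x ∈ Ω) (hy : y ∈ iri Ω)
    {l : ℝ} (hl : l ∈ Ioc (0 : ℝ) 1) : lineMap x y l ∈ iri Ω := by
  obtain ⟨hyΩ, L, hL⟩ := hy
  have hz : lineMap x y l ∈ Ω := hconv.lineMap_mem hx hyΩ (Ioc_subset_Icc_self hl)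
  refine ⟨hz, L, (hL ▸ coneGen_image_sub_subset_of_lineMap hconv hx hl).antisymm ?_⟩
  exact coneGen_subset_submodule (image_sub_subset_submodule (hL ▸ subset_coneGen _) hz)

variable [TopologicalSpace X]

lemma lineMap_mem_qri (hconv : Convex ℝ Ω) {x y : X} (hx : x ∈ Ω) (hy : y ∈ qri Ω)
    {l : ℝ} (hl : l ∈ Ioc (0 : ℝ) 1) : lineMap x y l ∈ qri Ω := by
  obtain ⟨hyΩ, L, hL⟩ := hy
  have hz : lineMap x y l ∈ Ω := hconv.lineMap_mem hx hyΩ (Ioc_subset_Icc_self hl)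
  have hLclosed : IsClosed (L : Set X) := hL ▸ isClosed_closure
  refine ⟨hz, L, (hL ▸ closure_mono (coneGen_image_sub_subset_of_lineMap hconv hx hl)).antisymm
    (closure_minimal (coneGen_subset_submodule ?_) hLclosed)⟩
  exact image_sub_subset_submodule ((subset_coneGen _).trans (hL ▸ subset_closure)) hz

variable [IsTopologicalAddGroup X] [ContinuousSMul ℝ X]

lemma lineMap_mem_ri (hconv : Convex ℝ Ω) {x y : X} (hx : x ∈ Ω) (hy : y ∈ ri Ω)
    {l : ℝ} (hl : l ∈ Ioc (0 : ℝ) 1) : lineMap x y l ∈ ri Ω := by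
  obtain ⟨hyΩ, V, hV, hVΩ⟩ := hy
  have hmem : ∀ {p}, p ∈ Ω → homothety x l p ∈ Ω := fun hp => by
    rw [homothety_eq_lineMap]
    exact hconv.lineMap_mem hx hp (Ioc_subset_Icc_self hl)
  have hinv : homothety x l⁻¹ (homothety x l y) = y := by
    rw [← homothety_mul_apply, inv_mul_cancel₀ hl.1.ne', homothety_one, id_apply]
  rw [← homothety_eq_lineMap]
  refine ⟨hmem hyΩ, homothety x l⁻¹ ⁻¹' V, ?_, ?_⟩
  · exact (homothety_continuous x l⁻¹).continuousAt.preimage_mem_nhds (by rwa [hinv])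
  · rintro w ⟨hwV, hwcl⟩
    have hcl : homothety x l⁻¹ w ∈ closure (affineSpan ℝ Ω : Set X) :=
      map_mem_closure (homothety_continuous x l⁻¹) hwcl
        fun p hp => homothety_mem (subset_affineSpan ℝ Ω hx) l⁻¹ hp
    have hw : homothety x l (homothety x l⁻¹ w) = w := by
      rw [← homothety_mul_apply, mul_inv_cancel₀ hl.1.ne', homothety_one, id_apply]
    exact hw ▸ hmem (hVΩ ⟨hwV, hcl⟩)

end RelativeInteriors

/-- half-open segments from a point of the set to a point of
`ri`, `iri`, or `qri` stay in `ri`, `iri`, or `qri`, respectively (the `qri`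
statement under local convexity). -/
theorem halfOpenSegment_subset_relative_interiors {X : Type*} [AddCommGroup X] [Module ℝ X]
    [TopologicalSpace X] [IsTopologicalAddGroup X] [ContinuousSMul ℝ X]
    (Ω : Set X) (hconv : Convex ℝ Ω) (xt : X) (hxt : xt ∈ Ω) (xb : X) :
    (xb ∈ ri Ω → halfOpenSegment xt xb ⊆ ri Ω) ∧
    (xb ∈ iri Ω → halfOpenSegment xt xb ⊆ iri Ω) ∧
    (LocallyConvexSpace ℝ X → xb ∈ qri Ω → halfOpenSegment xt xb ⊆ qri Ω) := by
  simp only [halfOpenSegment_eq_image_lineMap, image_subset_iff]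
  exact ⟨fun hxb l hl => lineMap_mem_ri hconv hxt hxb hl,
    fun hxb l hl => lineMap_mem_iri hconv hxt hxb hl,
    fun _ hxb l hl => lineMap_mem_qri hconv hxt hxb hl⟩
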